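/- arXiv:2111.06974 — 4 statements merged into one kernel-verified Lean document; each statement's English description precedes it below -/
import Mathlib

section
/- Let m be a positive natural number, let a, μ ∈ ℝᵐ, let P be a real m×m matrix, let b ∈ ℝ, and let c ≥ 0. Then the (m+1)×(m+1) block matrix [[I_m, √c · Pᵀa], [√c · (Pᵀa)ᵀ, ⟪a, μ⟫ − b]] (with I_m the m×m identity, Pᵀa a column vector, and ⟪a, μ⟫ − b a scalar) is positive semidefinite if and only if ⟪a, μ⟫ − c · ‖Pᵀa‖² ≥ b; equivalently, writing Σ = P·Pᵀ, if and only if aᵀμ − c · aᵀΣa ≥ b. -/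
/-! Taking the Schur complement of the identity block leaves the `1 × 1` matrix
`⟪a, μ⟫ - b - c‖Pᵀa‖²`, which is positive semidefinite exactly when that scalar is nonnegative;
the `Σ` form follows from `aᵀ(PPᵀ)a = ‖Pᵀa‖²`. -/

open Matrix

namespace Matrix

variable {ι m n R : Type*} [Fintype m] [Fintype n]

section StarOrdered

variable [CommRing R] [PartialOrder R] [StarRing R] [StarOrderedRing R]

theorem of_const_posSemidef_iff [Unique ι] (r : R) :
    (of fun _ _ : ι => r).PosSemidef ↔ 0 ≤ r := by
  have hdiag : (of fun _ _ : ι => r) = diagonal fun _ => r := by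
    ext i j
    simp [Subsingleton.elim i j]
  rw [hdiag, posSemidef_diagonal_iff, Unique.forall_iff]

theorem fromBlocks_one_posSemidef_iff [DecidableEq m] [NoZeroDivisors R]
    (B : Matrix m n R) (D : Matrix n n R) :
    (fromBlocks 1 B Bᴴ D).PosSemidef ↔ (D - Bᴴ * B).PosSemidef := by
  let : Invertible (1 : Matrix m m R) := invertibleOne
  simpa using PosDef.fromBlocks₁₁ B D PosDef.one

end StarOrdered

theorem dotProduct_mul_transpose_mulVec [CommSemiring R] (P : Matrix m n R) (a : m → R) :
    a ⬝ᵥ ((P * Pᵀ) *ᵥ a) = (Pᵀ *ᵥ a) ⬝ᵥ (Pᵀ *ᵥ a) := by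
  rw [← mulVec_mulVec, dotProduct_mulVec, ← mulVec_transpose]

end Matrix

theorem fromBlocks_posSemidef_iff_cbf_constraint_general
    (m : ℕ) (a μ : Fin m → ℝ) (P : Matrix (Fin m) (Fin m) ℝ)
    (b c : ℝ) (hc : 0 ≤ c) :
    ((Matrix.fromBlocks
        (1 : Matrix (Fin m) (Fin m) ℝ)
        (Matrix.replicateCol (Fin 1) (Real.sqrt c • (Pᵀ *ᵥ a)))
        (Matrix.replicateCol (Fin 1) (Real.sqrt c • (Pᵀ *ᵥ a)))ᵀ
        (Matrix.of fun _ _ : Fin 1 => a ⬝ᵥ μ - b)).PosSemidef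
      ↔ a ⬝ᵥ μ - c * ((Pᵀ *ᵥ a) ⬝ᵥ (Pᵀ *ᵥ a)) ≥ b)
    ∧ (a ⬝ᵥ μ - c * ((Pᵀ *ᵥ a) ⬝ᵥ (Pᵀ *ᵥ a)) ≥ b
      ↔ a ⬝ᵥ μ - c * (a ⬝ᵥ ((P * Pᵀ) *ᵥ a)) ≥ b) := by
  set v := Pᵀ *ᵥ a
  refine ⟨?_, by rw [dotProduct_mul_transpose_mulVec]⟩
  have hschur : (of fun _ _ : Fin 1 => a ⬝ᵥ μ - b) -
      (replicateCol (Fin 1) (√c • v))ᴴ * replicateCol (Fin 1) (√c • v) =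
      of fun _ _ : Fin 1 => a ⬝ᵥ μ - c * (v ⬝ᵥ v) - b := by
    ext
    simp only [conjTranspose_eq_transpose_of_trivial, transpose_replicateCol,
      replicateRow_mul_replicateCol, smul_dotProduct, dotProduct_smul, smul_eq_mul,
      ← mul_assoc, Real.mul_self_sqrt hc, Matrix.sub_apply, of_apply]
    ring
  rw [← conjTranspose_eq_transpose_of_trivial, fromBlocks_one_posSemidef_iff, hschur,
    of_const_posSemidef_iff, sub_nonneg, ge_iff_le]

/-- Schur-complement reformulation of the chance-constrained CBF condition:
the block matrix `[[I, √c · Pᵀa], [√c · (Pᵀa)ᵀ, ⟪a, μ⟫ - b]]` is positive semidefinite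
iff `⟪a, μ⟫ - c‖Pᵀa‖² ≥ b`, equivalently (with `Σ = PPᵀ`) iff `aᵀμ - c·aᵀΣa ≥ b`. -/
theorem fromBlocks_posSemidef_iff_cbf_constraint
    (m : ℕ) (hm : 0 < m) (a μ : Fin m → ℝ) (P : Matrix (Fin m) (Fin m) ℝ)
    (b c : ℝ) (hc : 0 ≤ c) :
    ((Matrix.fromBlocks
        (1 : Matrix (Fin m) (Fin m) ℝ)
        (Matrix.replicateCol (Fin 1) (Real.sqrt c • (Pᵀ *ᵥ a)))
        (Matrix.replicateCol (Fin 1) (Real.sqrt c • (Pᵀ *ᵥ a)))ᵀ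
        (Matrix.of fun _ _ : Fin 1 => a ⬝ᵥ μ - b)).PosSemidef
      ↔ a ⬝ᵥ μ - c * ((Pᵀ *ᵥ a) ⬝ᵥ (Pᵀ *ᵥ a)) ≥ b)
    ∧ (a ⬝ᵥ μ - c * ((Pᵀ *ᵥ a) ⬝ᵥ (Pᵀ *ᵥ a)) ≥ b
      ↔ a ⬝ᵥ μ - c * (a ⬝ᵥ ((P * Pᵀ) *ᵥ a)) ≥ b) :=
  fromBlocks_posSemidef_iff_cbf_constraint_general m a μ P b c hc
end

section
/- Let (Ω, 𝓕) be a measurable space, let ℙ be a probability measure on Ω, let λ > 0, let S : Ω → ℝ be a bounded measurable function, and set η = ∫ exp(−S(x)/λ) dℙ(x). Then η ∈ (0, ∞), the measure ℚ* defined as ℙ weighted by the density x ↦ exp(−S(x)/λ)/η (i.e., ℚ*(E) = (1/η)∫_E exp(−S/λ) dℙ) is a probability measure absolutely continuous with respect to ℙ, and it attains the Gibbs variational bound with equality: ∫ S dℚ* + λ · KL(ℚ*‖ℙ) = −λ · log η. -/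
open MeasureTheory Real

/-- The Kullback–Leibler divergence `KL(Q‖P) = ∫ log (dQ/dP) dQ` for `Q ≪ P`. -/
noncomputable def klDiv {Ω : Type*} [MeasurableSpace Ω] (Q P : Measure Ω) : ℝ :=
  ∫ x, Real.log (Q.rnDeriv P x).toReal ∂Q

/-! The Gibbs measure `Q*` is Mathlib's exponentially tilted measure `P.tilted (-S/λ)`. Its
log-density with respect to `P` is `-S/λ - log η`, so integrating against `Q*` gives
`KL(Q*‖P) = -(∫ S dQ*)/λ - log η`, which is the claimed identity after multiplying by `λ`. -/

section

variable {Ω : Type*} [MeasurableSpace Ω] {μ : Measure Ω}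

lemma integrable_exp_of_abs_le [IsFiniteMeasure μ] {f : Ω → ℝ} (hf : Measurable f) {C : ℝ}
    (hC : ∀ x, |f x| ≤ C) : Integrable (fun x ↦ exp (f x)) μ :=
  .of_bound hf.exp.aestronglyMeasurable (exp C) <| ae_of_all _ fun x ↦ by
    rw [norm_of_nonneg (exp_pos _).le]
    exact exp_le_exp.2 (le_of_abs_le (hC x))

lemma klDiv_tilted_self [SigmaFinite μ] [NeZero μ] {f : Ω → ℝ}
    (hexp : Integrable (fun x ↦ exp (f x)) μ) (hf : Integrable f (μ.tilted f)) :
    klDiv (μ.tilted f) μ = ∫ x, f x ∂μ.tilted f - log (∫ x, exp (f x) ∂μ) := by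
  have := isProbabilityMeasure_tilted hexp
  rw [klDiv, integral_congr_ae ((tilted_absolutelyContinuous μ f).ae_le
      (log_rnDeriv_tilted_left_self hexp)),
    integral_sub hf (integrable_const _), integral_const, probReal_univ, one_smul]

end

/-- The Gibbs measure `Q*` with density `exp(-S/λ)/η` w.r.t. `P` is a probability measure,
absolutely continuous w.r.t. `P`, `η ∈ (0, ∞)`, and it attains the Gibbs variational bound
with equality: `∫ S dQ* + λ·KL(Q*‖P) = -λ log η`. -/
theorem gibbs_measure_attains_bound
    {Ω : Type*} [MeasurableSpace Ω] (P : Measure Ω) [IsProbabilityMeasure P]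
    (lam : ℝ) (hlam : 0 < lam)
    (S : Ω → ℝ) (hS : Measurable S) (C : ℝ) (hbdd : ∀ x, |S x| ≤ C)
    (η : ℝ) (hη : η = ∫ x, Real.exp (-S x / lam) ∂P)
    (Qstar : Measure Ω)
    (hQstar : Qstar = P.withDensity (fun x => ENNReal.ofReal (Real.exp (-S x / lam) / η))) :
    0 < η ∧
    IsProbabilityMeasure Qstar ∧
    Qstar ≪ P ∧
    ∫ x, S x ∂Qstar + lam * klDiv Qstar P = -lam * Real.log η := by
  have hQ_tilted : Qstar = P.tilted (fun x ↦ -S x / lam) := by rw [hQstar, hη]; rfl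
  subst hη hQ_tilted
  have hexp : Integrable (fun x ↦ exp (-S x / lam)) P :=
    integrable_exp_of_abs_le (hS.neg.div_const lam) (C := C / lam) fun x ↦ by
      rw [abs_div, abs_neg, abs_of_pos hlam]
      exact div_le_div_of_nonneg_right (hbdd x) hlam.le
  have hQ_prob := isProbabilityMeasure_tilted hexp
  have hS_int : Integrable S (P.tilted fun x ↦ -S x / lam) :=
    .of_bound hS.aestronglyMeasurable C (ae_of_all _ hbdd)
  refine ⟨integral_exp_pos hexp, hQ_prob, tilted_absolutelyContinuous P _, ?_⟩
  rw [klDiv_tilted_self hexp (hS_int.neg.div_const lam), integral_div, integral_neg]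
  field_simp
  ring
end

section
/- Let (Ω, 𝓕) be a measurable space, let ℙ be a probability measure on Ω, let λ > 0, let S : Ω → ℝ be a bounded measurable function with η = ∫ exp(−S/λ) dℙ, and let ℚ be any probability measure on Ω absolutely continuous with respect to ℙ with finite KL(ℚ‖ℙ). If ∫ S dℚ + λ · KL(ℚ‖ℙ) = −λ · log η, then ℚ equals the Gibbs measure ℚ* given by weighting ℙ with the density x ↦ exp(−S(x)/λ)/η. -/
open MeasureTheory

/-!
Write `f = -S/λ` and let `ℚ* = ℙ.tilted f`, which is the Gibbs measure. Since
`log (dℚ/dℚ*) = log (dℚ/dℙ) - f + log η` `ℚ`-a.e., the free energy splits as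
`∫ S dℚ + λ·KL(ℚ‖ℙ) = -λ log η + λ·KL(ℚ‖ℚ*)`. Attaining the bound `-λ log η` therefore forces
`KL(ℚ‖ℚ*) = 0`, and by the equality case of Gibbs' inequality `ℚ = ℚ*`.
-/

namespace MeasureTheory

variable {α : Type*} [MeasurableSpace α]

lemma Measure.eq_of_integral_llr_eq_zero {μ ν : Measure α} [IsFiniteMeasure μ] [IsFiniteMeasure ν]
    (hμν : μ ≪ ν) (h_univ : μ Set.univ = ν Set.univ) (h_int : Integrable (llr μ ν) μ)
    (h_zero : ∫ x, llr μ ν x ∂μ = 0) : μ = ν := by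
  have h_toReal : (InformationTheory.klDiv μ ν).toReal = 0 := by
    rw [InformationTheory.toReal_klDiv_of_measure_eq hμν h_univ, h_zero]
  refine InformationTheory.klDiv_eq_zero_iff.mp ?_
  exact (ENNReal.toReal_eq_zero_iff _).mp h_toReal |>.resolve_right
    (InformationTheory.klDiv_ne_top hμν h_int)

lemma integral_add_mul_integral_llr_eq_integral_llr_tilted {μ ν : Measure α}
    [IsProbabilityMeasure μ] [SigmaFinite ν] (hμν : μ ≪ ν) {S : α → ℝ} (hS : Integrable S μ)
    {lam : ℝ} (hlam : lam ≠ 0) (h_exp : Integrable (fun x ↦ Real.exp (-S x / lam)) ν)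
    (h_int : Integrable (llr μ ν) μ) :
    ∫ x, S x ∂μ + lam * ∫ x, llr μ ν x ∂μ
      = -lam * Real.log (∫ x, Real.exp (-S x / lam) ∂ν)
        + lam * ∫ x, llr μ (ν.tilted fun x ↦ -S x / lam) x ∂μ := by
  have hf : Integrable (fun x ↦ -S x / lam) μ := hS.neg.div_const lam
  rw [integral_llr_tilted_right hμν hf h_exp h_int, integral_div, integral_neg]
  field_simp
  ring

lemma integrable_exp_neg_div_of_abs_le {μ : Measure α} [IsFiniteMeasure μ] {S : α → ℝ}
    (hS : Measurable S) {C : ℝ} (hC : ∀ x, |S x| ≤ C) (lam : ℝ) :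
    Integrable (fun x ↦ Real.exp (-S x / lam)) μ := by
  have h := ProbabilityTheory.integrable_exp_mul_of_mem_Icc (μ := μ) (t := -lam⁻¹)
    hS.aemeasurable (Filter.Eventually.of_forall fun x ↦ abs_le.mp (hC x))
  convert h using 3
  ring

end MeasureTheory

/-- Uniqueness of the minimizer of the free energy: if a probability measure `Q ≪ P` with
finite KL divergence attains the Gibbs variational bound `∫ S dQ + λ·KL(Q‖P) = -λ log η`,
then `Q` is the Gibbs measure with density `exp(-S/λ)/η` with respect to `P`. -/
theorem gibbs_measure_unique_minimizer
    {Ω : Type*} [MeasurableSpace Ω] (P Q : Measure Ω)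
    [IsProbabilityMeasure P] [IsProbabilityMeasure Q]
    (hQP : Q ≪ P)
    (hKL : Integrable (fun x => Real.log (Q.rnDeriv P x).toReal) Q)
    (lam : ℝ) (hlam : 0 < lam)
    (S : Ω → ℝ) (hS : Measurable S) (C : ℝ) (hbdd : ∀ x, |S x| ≤ C)
    (η : ℝ) (hη : η = ∫ x, Real.exp (-S x / lam) ∂P)
    (heq : ∫ x, S x ∂Q + lam * klDiv Q P = -lam * Real.log η) :
    Q = P.withDensity (fun x => ENNReal.ofReal (Real.exp (-S x / lam) / η)) := by
  have hS_int : Integrable S Q :=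
    .of_bound hS.aestronglyMeasurable C (.of_forall fun x ↦ hbdd x)
  have h_exp := integrable_exp_neg_div_of_abs_le (μ := P) hS hbdd lam
  have h_tilted_prob := isProbabilityMeasure_tilted h_exp
  have h_llr_zero : ∫ x, llr Q (P.tilted fun x ↦ -S x / lam) x ∂Q = 0 := by
    have h := integral_add_mul_integral_llr_eq_integral_llr_tilted hQP hS_int hlam.ne' h_exp hKL
    have hKL_eq : klDiv Q P = ∫ x, llr Q P x ∂Q := rfl
    rw [← hη, ← hKL_eq, heq] at h
    simpa [hlam.ne'] using h
  have hQ_eq := Measure.eq_of_integral_llr_eq_zero (hQP.trans (absolutelyContinuous_tilted h_exp))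
    (by simp) (integrable_llr_tilted_right hQP (hS_int.neg.div_const lam) hKL h_exp) h_llr_zero
  rw [hQ_eq, Measure.tilted, hη]
end

section
/- Let α : ℝ → ℝ be a Lipschitz continuous, monotone nondecreasing function with α(0) = 0, and let h : ℝ → ℝ be differentiable. If h(0) ≥ 0 and for every t ≥ 0 the derivative satisfies h'(t) ≥ −α(h(t)), then h(t) ≥ 0 for all t ≥ 0. -/
/-- Comparison lemma behind control barrier functions: if `α` is Lipschitz, monotone
nondecreasing with `α 0 = 0`, `h` is differentiable, `h 0 ≥ 0`, and
`h' t ≥ -α (h t)` for all `t ≥ 0`, then `h t ≥ 0` for all `t ≥ 0`. -/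
theorem cbf_forward_invariance
    (α : ℝ → ℝ) (K : NNReal) (hLip : LipschitzWith K α)
    (hMono : Monotone α) (hα0 : α 0 = 0)
    (h : ℝ → ℝ) (hdiff : Differentiable ℝ h)
    (h0 : 0 ≤ h 0)
    (hineq : ∀ t : ℝ, 0 ≤ t → deriv h t ≥ -α (h t)) :
    ∀ t : ℝ, 0 ≤ t → 0 ≤ h t := by
  intro t1 ht1
  by_contra hneg
  push_neg at hneg
  -- Let s be the last time in [0, t1] where h is nonnegative.
  set S : Set ℝ := {t | t ∈ Set.Icc (0:ℝ) t1 ∧ 0 ≤ h t} with hS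
  have hne : S.Nonempty := ⟨0, ⟨le_refl 0, ht1⟩, h0⟩
  have hbdd : BddAbove S := ⟨t1, fun x hx => hx.1.2⟩
  set s := sSup S with hs
  have hsmem : s ∈ Set.Icc (0:ℝ) t1 ∧ 0 ≤ h s := by
    have hclosed : IsClosed S := by
      have : S = Set.Icc (0:ℝ) t1 ∩ h ⁻¹' Set.Ici 0 := by
        ext x; simp [hS, Set.mem_Icc, and_assoc]
      rw [this]
      exact isClosed_Icc.inter (isClosed_Ici.preimage hdiff.continuous)
    exact hclosed.csSup_mem hne hbdd
  have hs0 : 0 ≤ s := hsmem.1.1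
  have hst1 : s ≤ t1 := hsmem.1.2
  have hhs : 0 ≤ h s := hsmem.2
  have hst1' : s < t1 := lt_of_le_of_ne hst1 (by intro heq; rw [heq] at hhs; linarith)
  -- On (s, t1], h is negative, so deriv h ≥ -α(h t) ≥ 0 there.
  have hlt : ∀ x ∈ Set.Ioc s t1, h x < 0 := by
    intro x hx
    by_contra hge
    push_neg at hge
    exact absurd (le_csSup hbdd ⟨⟨hs0.trans hx.1.le, hx.2⟩, hge⟩) (not_le.mpr hx.1)
  have hmono : MonotoneOn h (Set.Icc s t1) := by
    apply monotoneOn_of_deriv_nonneg (convex_Icc s t1) hdiff.continuous.continuousOn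
      (fun x _ => (hdiff x).differentiableWithinAt)
    intro x hx
    rw [interior_Icc] at hx
    have hx0 : 0 ≤ x := hs0.trans hx.1.le
    have hhx : h x < 0 := hlt x ⟨hx.1, hx.2.le⟩
    have : α (h x) ≤ 0 := hα0 ▸ hMono hhx.le
    linarith [hineq x hx0]
  have := hmono ⟨le_refl s, hst1⟩ ⟨hst1, le_refl t1⟩ hst1
  linarith
end
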